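/- Let a and b be coprime positive integers. For every (b,-a)-Dyck partition π ∈ D_{b,-a}(a,b), the partitions f̃(π) and f(π) are equal. -/

import Mathlib

inductive Letter : Type
  | N : Letter
  | E : Letter
deriving DecidableEq, Repr

/-- weight of a letter: `N` has weight `r`, `E` has weight `s`. -/
def wt (r s : ℤ) : Letter → ℤ
  | Letter.N => r
  | Letter.E => s

/-- Pair each letter of the word with its `(r,s)`-level (east-north convention),
    starting from level `l`. -/
def lvls (r s : ℤ) : ℤ → List Letter → List (Letter × ℤ)
  | _, [] => []
  | l, c :: w => (c, l + wt r s c) :: lvls r s (l + wt r s c) w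

/-- Helper for `mkwd`: given the row lengths of the partition read from the bottom
    of the rectangle (weakly increasing list), produce the frontier word. -/
def stairs (b : ℕ) : ℕ → List ℕ → List Letter
  | prev, [] => List.replicate (b - prev) Letter.E
  | prev, q :: qs => List.replicate (q - prev) Letter.E ++ Letter.N :: stairs b q qs

/-- `mkwd a b π`: the word of the frontier lattice path (from `(0,0)` to `(b,a)`) of
    the partition `π` drawn in the `a×b` rectangle: the number of `E`'s before the
    `i`-th `N` is the `(a+1-i)`-th part of `π` (padded with zero parts to length `a`). -/
def mkwd (a b : ℕ) (π : List ℕ) : List Letter :=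
  stairs b 0 ((π ++ List.replicate (a - π.length) 0).reverse)

/-- The `i`-th part of `π` (1-based), zero beyond the length of `π`. -/
def part (π : List ℕ) (i : ℕ) : ℕ := π.getD (i - 1) 0

/-- The `(b,-a)`-level of the lattice square `[x,x+1]×[y,y+1]`, i.e. of its
    southeast corner `(x+1, y)`. -/
def sqLevel (a b : ℕ) (x y : ℕ) : ℤ := (b : ℤ) * y - (a : ℤ) * (x + 1)

/-- The set of `(b,-a)`-levels of the lattice squares lying above the line `by = ax`
    and below `mkpath(π)` (the square `(x,y)` lies below the path iff `x ≥ part π (a-y)`,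
    and strictly above the line iff its level is positive). -/
def lvlSet (a b : ℕ) (π : List ℕ) : Finset ℤ :=
  ((Finset.range b ×ˢ Finset.range a).filter
    (fun p => part π (a - p.2) ≤ p.1 ∧ 0 < sqLevel a b p.1 p.2)).image
    (fun p => sqLevel a b p.1 p.2)

/-- `π` is a `(b,-a)`-Dyck partition: every step of `mkpath(π)` has nonnegative
    `(b,-a)`-level (east-north convention), i.e. the path stays weakly above `by = ax`. -/
def IsDyckPtn (a b : ℕ) (π : List ℕ) : Prop :=
  ∀ p ∈ lvls (b : ℤ) (-(a : ℤ)) 0 (mkwd a b π), 0 ≤ p.2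

/-- `π` is a partition contained in the `a×b` rectangle. -/
def IsPtnIn (a b : ℕ) (π : List ℕ) : Prop :=
  List.Pairwise (· ≥ ·) π ∧ π.length ≤ a ∧ ∀ p ∈ π, p ≤ b

/-- `mkptn w`: the partition associated to the word `w`: one part for each `N` of `w`,
    equal to the number of `E`'s preceding it, listed in decreasing order
    (zero parts are discarded). -/
def mkptn (w : List Letter) : List ℕ :=
  (((List.range w.length).filterMap (fun p =>
      if w[p]? = some Letter.N then some ((w.take p).count Letter.E) else none)).reverse).filter
    (fun t => decide (0 < t))

/-- The word `z = z₀z₁z₂⋯` (truncated at the harmless index `a*b`, beyond which all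
    letters are `E`): `zᵢ = N` iff `i` is the level of a lattice square between
    `mkpath(π)` and the line `by = ax`, and `zᵢ = E` otherwise (in particular `z₀ = E`). -/
def zwordAHJ (a b : ℕ) (π : List ℕ) : List Letter :=
  (List.range (a * b)).map (fun i => if (i : ℤ) ∈ lvlSet a b π then Letter.N else Letter.E)

/-- The map `f̃`: `f̃(π) = mkptn(z₀z₁z₂⋯)`. -/
def ftilde (a b : ℕ) (π : List ℕ) : List ℕ := mkptn (zwordAHJ a b π)

/-- The map `f`: the partition whose first-column hook-lengths, in increasing order,
    are the levels of the squares between `mkpath(π)` and the line `by = ax`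
    (the `i`-th row from the bottom, `i ≥ 1`, has length `h_i - i + 1`). -/
def fAHJ (a b : ℕ) (π : List ℕ) : List ℕ :=
  let h := (lvlSet a b π).sort (· ≤ ·)
  ((List.range h.length).map (fun i => (h.getD i 0 - (i : ℤ)).toNat)).reverse

/-!
Let `h₁ < ⋯ < h_k` be the levels of the squares between `mkpath(π)` and the line `by = ax`;
they lie in `(0, ab)`. The word `z` has its letters `N` exactly at the positions `h_i`, so the
`i`-th `N` is preceded by `h_i - (i - 1)` letters `E`. Hence `mkptn z` has the parts
`h_i - i + 1 > 0`, which are the rows of the partition with first-column hook lengths `h_i`.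
-/

def eCountsBeforeN (w : List Letter) : List ℕ :=
  (List.range w.length).filterMap fun p =>
    if w[p]? = some Letter.N then some ((w.take p).count Letter.E) else none

lemma mkptn_eq_filter_reverse_eCountsBeforeN (w : List Letter) :
    mkptn w = (eCountsBeforeN w).reverse.filter (0 < ·) := rfl

lemma eCountsBeforeN_concat (w : List Letter) (c : Letter) :
    eCountsBeforeN (w ++ [c]) =
      eCountsBeforeN w ++ if c = Letter.N then [w.count Letter.E] else [] := by
  unfold eCountsBeforeN
  rw [List.length_append, List.length_singleton, List.range_succ, List.filterMap_append]
  congr 1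
  · refine List.filterMap_congr fun p hp => ?_
    rw [List.mem_range] at hp
    rw [List.getElem?_append_left hp, List.take_append_of_le_length hp.le]
  · cases c <;> simp

def indicatorWord (n : ℕ) (P : ℕ → Prop) [DecidablePred P] : List Letter :=
  (List.range n).map fun i => if P i then Letter.N else Letter.E

section indicatorWord

variable (P : ℕ → Prop) [DecidablePred P]

lemma indicatorWord_succ (n : ℕ) :
    indicatorWord (n + 1) P = indicatorWord n P ++ [if P n then Letter.N else Letter.E] := by
  simp [indicatorWord, List.range_succ]

lemma count_E_indicatorWord (n : ℕ) :
    (indicatorWord n P).count Letter.E = n - ((List.range n).filter P).length := by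
  induction n with
  | zero => rfl
  | succ n ih =>
    by_cases hn : P n
    · simp [indicatorWord_succ, List.range_succ, ih, hn]
    · have hle := List.length_filter_le (fun i => decide (P i)) (List.range n)
      rw [List.length_range] at hle
      simp [indicatorWord_succ, List.range_succ, ih, hn]
      omega

lemma eCountsBeforeN_indicatorWord (n : ℕ) :
    eCountsBeforeN (indicatorWord n P) = ((List.range n).filter P).mapIdx fun i p => p - i := by
  induction n with
  | zero => rfl
  | succ n ih =>
    by_cases hn : P n <;>
      simp [indicatorWord_succ, eCountsBeforeN_concat, ih, List.range_succ, hn,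
        count_E_indicatorWord]

end indicatorWord

lemma lt_getElem_of_pairwise_lt_of_pos {l : List ℕ} (hl : l.Pairwise (· < ·)) (hpos : ∀ x ∈ l, 0 < x)
    (i : ℕ) (hi : i < l.length) : i < l[i] := by
  induction i with
  | zero => exact hpos _ (l.getElem_mem hi)
  | succ j ih =>
    have := List.pairwise_iff_getElem.mp hl j (j + 1) (by omega) hi (by omega)
    have := ih (by omega)
    omega

/-- Since position `0` is never an `N`, the `k`-th `N` is preceded by at least one `E`,
so `mkptn` discards no part. -/
lemma mkptn_indicatorWord (P : ℕ → Prop) [DecidablePred P] (hP : ¬ P 0) (n : ℕ) :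
    mkptn (indicatorWord n P) = (((List.range n).filter P).mapIdx fun i p => p - i).reverse := by
  rw [mkptn_eq_filter_reverse_eCountsBeforeN, eCountsBeforeN_indicatorWord, List.filter_eq_self]
  have hl : ((List.range n).filter P).Pairwise (· < ·) := List.pairwise_lt_range.filter _
  have hpos : ∀ x ∈ (List.range n).filter P, 0 < x := by
    intro x hx
    rw [List.mem_filter] at hx
    exact Nat.pos_of_ne_zero fun h => hP (by simpa [h] using hx.2)
  intro t ht
  obtain ⟨i, hi, rfl⟩ := List.mem_mapIdx.mp (List.mem_reverse.mp ht)
  have := lt_getElem_of_pairwise_lt_of_pos hl hpos i hi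
  simp only [decide_eq_true_eq]
  omega

def hookPtn (h : List ℤ) : List ℕ :=
  ((List.range h.length).map fun i => (h.getD i 0 - i).toNat).reverse

lemma hookPtn_map_natCast (l : List ℕ) :
    hookPtn (l.map (↑)) = (l.mapIdx fun i p => p - i).reverse := by
  unfold hookPtn
  congr 1
  refine List.ext_getElem (by simp) fun i h₁ h₂ => ?_
  simp only [List.length_map, List.length_range] at h₁
  simp [List.getD_eq_getElem?_getD, h₁]

lemma Finset.sort_eq_map_natCast_filter_range {S : Finset ℤ} {n : ℕ}
    (hS : (S : Set ℤ) ⊆ Set.Ico 0 n) :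
    S.sort (· ≤ ·) = ((List.range n).filter fun i : ℕ => (i : ℤ) ∈ S).map (↑) := by
  refine (S.sortedLT_sort.pairwise.eq_of_mem_iff ?_ fun z => ?_)
  · exact (List.pairwise_lt_range.filter _).map _ fun _ _ => Int.ofNat_lt.mpr
  · rw [Finset.mem_sort, List.mem_map]
    constructor
    · intro hz
      obtain ⟨h0, hn⟩ := hS hz
      lift z to ℕ using h0
      exact ⟨z, by simpa [hz] using hn, rfl⟩
    · rintro ⟨i, hi, rfl⟩
      exact of_decide_eq_true (List.mem_filter.mp hi).2

theorem mkptn_indicatorWord_eq_hookPtn {S : Finset ℤ} {n : ℕ} (hS : (S : Set ℤ) ⊆ Set.Ioo 0 n) :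
    mkptn (indicatorWord n fun i => (i : ℤ) ∈ S) = hookPtn (S.sort (· ≤ ·)) := by
  rw [Finset.sort_eq_map_natCast_filter_range (hS.trans Set.Ioo_subset_Ico_self),
    hookPtn_map_natCast, mkptn_indicatorWord]
  exact fun h => lt_irrefl _ (hS h).1

lemma lvlSet_subset_Ioo (a b : ℕ) (π : List ℕ) :
    (lvlSet a b π : Set ℤ) ⊆ Set.Ioo 0 ↑(a * b) := by
  intro z hz
  obtain ⟨⟨x, y⟩, hxy, rfl⟩ := Finset.mem_image.mp hz
  rw [Finset.mem_filter, Finset.mem_product, Finset.mem_range, Finset.mem_range] at hxy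
  obtain ⟨⟨hx, hy⟩, -, hpos⟩ := hxy
  refine ⟨hpos, ?_⟩
  rw [sqLevel]
  push_cast
  have : (b : ℤ) * y < b * a := by
    apply mul_lt_mul_of_pos_left <;> omega
  nlinarith

/-- `zwordAHJ` elaborates `List.range (a * b)` through the monadic coercion
`List ℕ → List ℤ`. -/
lemma zwordAHJ_eq_indicatorWord (a b : ℕ) (π : List ℕ) :
    zwordAHJ a b π = indicatorWord (a * b) fun i => (i : ℤ) ∈ lvlSet a b π := by
  simp only [zwordAHJ, indicatorWord, List.bind_eq_flatMap, List.pure_def, ← List.map_eq_flatMap,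
    List.map_map]
  rfl

theorem ftilde_eq_f_general (a b : ℕ) (π : List ℕ) :
    ftilde a b π = fAHJ a b π := by
  rw [ftilde, zwordAHJ_eq_indicatorWord]
  exact mkptn_indicatorWord_eq_hookPtn (lvlSet_subset_Ioo a b π)

/-- For coprime positive `a`, `b` and every `(b,-a)`-Dyck partition `π` in the
    `a×b` rectangle, the partitions `f̃(π)` and `f(π)` are equal. -/
theorem ftilde_eq_f (a b : ℕ) (ha : 0 < a) (hb : 0 < b) (hab : Nat.Coprime a b)
    (π : List ℕ) (hπ : IsPtnIn a b π) (hD : IsDyckPtn a b π) :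
    ftilde a b π = fAHJ a b π :=
  ftilde_eq_f_general a b π
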